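/- Let p_0, p_1, … be pairwise distinct propositional atoms and let 𝒯 = { Cn({p_i}) : i ∈ ℕ }. Then 𝒯 is a countable family of finitely generated non-including theories, and 𝒯 is not representable by any default theory: there is no default theory (D,W) with ext(D,W) = 𝒯. -/

import Mathlib

/-- Propositional formulas over a set of atoms `α`. -/
inductive PropForm (α : Type) : Type
  | atom : α → PropForm α
  | fls  : PropForm α
  | impl : PropForm α → PropForm α → PropForm α

namespace PropForm

/-- Negation `¬φ`, definable as `φ → ⊥`. -/
def neg {α : Type} (φ : PropForm α) : PropForm α := impl φ fls

/-- Conjunction, definable from implication and falsum. -/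
def conj {α : Type} (φ ψ : PropForm α) : PropForm α := (φ.impl ψ.neg).neg

/-- Biimplication `φ ↔ ψ`. -/
def biimp {α : Type} (φ ψ : PropForm α) : PropForm α := conj (φ.impl ψ) (ψ.impl φ)

/-- Evaluation of a formula under a valuation of the atoms. -/
def eval {α : Type} (v : α → Prop) : PropForm α → Prop
  | atom a   => v a
  | fls      => False
  | impl φ ψ => eval v φ → eval v ψ

/-- Renaming/embedding of atoms. -/
def map {α β : Type} (f : α → β) : PropForm α → PropForm β
  | atom a   => atom (f a)
  | fls      => fls
  | impl φ ψ => impl (map f φ) (map f ψ)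

end PropForm

/-- Classical propositional consequence operator. -/
def Cn {α : Type} (S : Set (PropForm α)) : Set (PropForm α) :=
  {φ | ∀ v : α → Prop, (∀ ψ ∈ S, ψ.eval v) → φ.eval v}

/-- A theory: a set of formulas closed under propositional consequence. -/
def IsTheory {α : Type} (S : Set (PropForm α)) : Prop := Cn S ⊆ S

/-- A set of formulas is consistent if its consequences are not the whole language. -/
def Consistent {α : Type} (S : Set (PropForm α)) : Prop := Cn S ≠ Set.univ

/-- A default `α : Γ / β` with prerequisite, finite set of justifications, consequent. -/
structure Default (α : Type) where
  pre : PropForm α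
  jus : Finset (PropForm α)
  con : PropForm α

/-- A default is applicable w.r.t. `S` if no justification's negation follows from `S`. -/
def Default.Applicable {α : Type} (S : Set (PropForm α)) (d : Default α) : Prop :=
  ∀ γ ∈ d.jus, γ.neg ∉ Cn S

/-- The reduct of `D` w.r.t. `S`: the monotone rules `pre/con` of `S`-applicable defaults. -/
def Reduct {α : Type} (D : Set (Default α)) (S : Set (PropForm α)) :
    Set (PropForm α × PropForm α) :=
  {r | ∃ d ∈ D, d.Applicable S ∧ r = (d.pre, d.con)}

/-- `Cn^B(W)`: consequences of `W` in propositional calculus augmented with rules `B`;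
the least set containing `W`, closed under `Cn`, and closed under the rules of `B`. -/
def CnRules {α : Type} (B : Set (PropForm α × PropForm α)) (W : Set (PropForm α)) :
    Set (PropForm α) :=
  ⋂₀ {S | W ⊆ S ∧ Cn S ⊆ S ∧ ∀ r ∈ B, r.1 ∈ S → r.2 ∈ S}

/-- `S` is an extension of the default theory `(D, W)`. -/
def IsExtension {α : Type} (D : Set (Default α)) (W S : Set (PropForm α)) : Prop :=
  S = CnRules (Reduct D S) W

/-- The family of all extensions of `(D, W)`. -/
def ext {α : Type} (D : Set (Default α)) (W : Set (PropForm α)) : Set (Set (PropForm α)) :=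
  {S | IsExtension D W S}

/-- A default is prerequisite-free if its prerequisite is a tautology. -/
def Default.PrereqFree {α : Type} (d : Default α) : Prop :=
  d.pre ∈ Cn (∅ : Set (PropForm α))

/-- A default is normal if it has the form `α : {β} / β`. -/
def Default.Normal {α : Type} (d : Default α) : Prop := d.jus = {d.con}

/-!
Membership in an extension is finitary: by compactness of propositional logic (Tychonoff on
`α → Bool`), a formula of an extension `S` is derived from `W` with finitely many rules of the
reduct `D_S`. Their justifications mention finitely many atoms, and a default that is applicable
with respect to some theory stays applicable with respect to `Cn {c}` for every atom `c` not
occurring in its justifications. So if `Cn {p₀}` and all `Cn {pᵢ}` were extensions, the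
derivation of `p₀` would go through in `Cn {pᵢ}` for a fresh `pᵢ`, although `p₀ ∉ Cn {pᵢ}`.
-/

open PropForm

variable {α : Type}

lemma subset_Cn (S : Set (PropForm α)) : S ⊆ Cn S := fun _ hφ _ hv => hv _ hφ

lemma Cn_mono {S T : Set (PropForm α)} (h : S ⊆ T) : Cn S ⊆ Cn T :=
  fun _ hφ v hv => hφ v fun ψ hψ => hv ψ (h hψ)

lemma isTheory_Cn (S : Set (PropForm α)) : IsTheory (Cn S) :=
  fun _ hφ v hv => hφ v fun _ hψ => hψ v hv

namespace PropForm

def atoms : PropForm α → Set α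
  | atom a => {a}
  | fls => ∅
  | impl φ ψ => atoms φ ∪ atoms ψ

lemma atoms_finite (φ : PropForm α) : φ.atoms.Finite := by
  induction φ with
  | atom a => exact Set.finite_singleton a
  | fls => exact Set.finite_empty
  | impl φ ψ hφ hψ => exact hφ.union hψ

lemma eval_congr {v w : α → Prop} (φ : PropForm α) (h : ∀ a ∈ φ.atoms, (v a ↔ w a)) :
    φ.eval v ↔ φ.eval w := by
  induction φ with
  | atom a => exact h a rfl
  | fls => exact Iff.rfl
  | impl φ ψ hφ hψ =>
    exact imp_congr (hφ fun a ha => h a (.inl ha)) (hψ fun a ha => h a (.inr ha))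

/-- Boolean rather than `Prop`-valued valuations, so that they form a compact space. -/
def models (φ : PropForm α) : Set (α → Bool) := {v | φ.eval fun a => v a = true}

lemma isClopen_models (φ : PropForm α) : IsClopen φ.models := by
  induction φ with
  | atom a => exact (isClopen_discrete {true}).preimage (continuous_apply a)
  | fls => exact isClopen_empty
  | impl φ ψ hφ hψ =>
    have : (φ.impl ψ).models = φ.modelsᶜ ∪ ψ.models := Set.ext fun _ => imp_iff_not_or
    exact this ▸ hφ.compl.union hψ

end PropForm

lemma mem_Cn_empty_of_mem_Cn_atom {φ : PropForm α} {c : α} (hc : c ∉ φ.atoms)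
    (h : φ ∈ Cn {atom c}) : φ ∈ Cn ∅ := by
  intro v _
  classical
  have hφ := h (Function.update v c True) (by simp [eval])
  refine (eval_congr φ fun a ha => ?_).mp hφ
  rw [Function.update_of_ne (ne_of_mem_of_not_mem ha hc)]

lemma atom_mem_Cn_atom_iff {a b : α} : atom a ∈ Cn {atom b} ↔ a = b :=
  ⟨fun h => h (· = b) (by simp [eval]), fun h => h ▸ subset_Cn _ rfl⟩

theorem exists_finite_subset_of_mem_Cn {S : Set (PropForm α)} {φ : PropForm α} (h : φ ∈ Cn S) :
    ∃ F : Set (PropForm α), F ⊆ S ∧ F.Finite ∧ φ ∈ Cn F := by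
  have hempty : φ.neg.models ∩ ⋂ ψ : S, models ψ = ∅ := by
    ext v
    simp only [Set.mem_inter_iff, Set.mem_iInter, Set.mem_empty_iff_false, iff_false, not_and]
    exact fun hneg hS => hneg (h _ fun ψ hψ => hS ⟨ψ, hψ⟩)
  obtain ⟨u, hu⟩ := (isClopen_models φ.neg).isClosed.isCompact.elim_finite_subfamily_closed
    (fun ψ : S => models ψ.1) (fun ψ => (isClopen_models ψ.1).isClosed) hempty
  refine ⟨Subtype.val '' (u : Set S), by simp, u.finite_toSet.image _, fun w hw => ?_⟩
  classical
  by_contra hφ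
  refine (Set.eq_empty_iff_forall_notMem.mp hu) (fun a => decide (w a)) ⟨?_, ?_⟩
  · simpa [models, eval, neg] using hφ
  · simp only [Set.mem_iInter]
    intro ψ hψ
    simpa [models] using hw ψ.1 ⟨ψ, hψ, rfl⟩

section CnRules

variable {B B' : Set (PropForm α × PropForm α)} {W S : Set (PropForm α)}

lemma CnRules_subset (hW : W ⊆ S) (hS : IsTheory S) (hB : ∀ r ∈ B, r.1 ∈ S → r.2 ∈ S) :
    CnRules B W ⊆ S :=
  Set.sInter_subset_of_mem ⟨hW, hS, hB⟩

lemma subset_CnRules : W ⊆ CnRules B W :=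
  fun _ hφ => Set.mem_sInter.mpr fun _ hT => hT.1 hφ

lemma isTheory_CnRules : IsTheory (CnRules B W) :=
  fun _ hφ => Set.mem_sInter.mpr fun _ hT => hT.2.1 (Cn_mono (Set.sInter_subset_of_mem hT) hφ)

lemma CnRules_apply_rule {r : PropForm α × PropForm α} (hr : r ∈ B) (h : r.1 ∈ CnRules B W) :
    r.2 ∈ CnRules B W :=
  Set.mem_sInter.mpr fun _ hT => hT.2.2 r hr (Set.mem_sInter.mp h _ hT)

lemma CnRules_mono (h : B ⊆ B') : CnRules B W ⊆ CnRules B' W :=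
  CnRules_subset subset_CnRules isTheory_CnRules fun _ hr => CnRules_apply_rule (h hr)

theorem exists_finite_rules_of_mem_CnRules {φ : PropForm α} (h : φ ∈ CnRules B W) :
    ∃ B₀ ⊆ B, B₀.Finite ∧ φ ∈ CnRules B₀ W := by
  let X : Set (PropForm α) := {ψ | ∃ B₀ ⊆ B, B₀.Finite ∧ ψ ∈ CnRules B₀ W}
  suffices CnRules B W ⊆ X from this h
  refine CnRules_subset (fun ψ hψ => ⟨∅, Set.empty_subset _, Set.finite_empty,
    subset_CnRules hψ⟩) (fun ψ hψ => ?_) fun r hr ⟨B₀, hB₀, hfin, h₁⟩ =>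
    ⟨insert r B₀, Set.insert_subset hr hB₀, hfin.insert r,
      CnRules_apply_rule (Set.mem_insert r B₀) (CnRules_mono (Set.subset_insert r B₀) h₁)⟩
  obtain ⟨F, hFX, hF, hψF⟩ := exists_finite_subset_of_mem_Cn hψ
  have hFX : ∀ χ ∈ F, ∃ B₀ ⊆ B, B₀.Finite ∧ χ ∈ CnRules B₀ W := hFX
  choose! g hgB hgfin hg using hFX
  refine ⟨⋃ χ ∈ F, g χ, Set.iUnion₂_subset hgB, hF.biUnion hgfin, isTheory_CnRules ?_⟩
  exact Cn_mono (fun χ hχ => CnRules_mono (Set.subset_biUnion_of_mem hχ) (hg χ hχ)) hψF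

end CnRules

lemma Default.Applicable.Cn_atom {d : Default α} {S : Set (PropForm α)} (h : d.Applicable S)
    {c : α} (hc : ∀ γ ∈ d.jus, c ∉ γ.atoms) : d.Applicable (Cn {atom c}) := by
  intro γ hγ hneg
  have hc' : c ∉ γ.neg.atoms := by simpa [neg, atoms] using hc γ hγ
  exact h γ hγ (Cn_mono (Set.empty_subset S)
    (mem_Cn_empty_of_mem_Cn_atom hc' (isTheory_Cn _ hneg)))

lemma exists_finite_forall_subset_Reduct_Cn_atom {D : Set (Default α)} {S : Set (PropForm α)}
    {B : Set (PropForm α × PropForm α)} (hB : B.Finite) (hBS : B ⊆ Reduct D S) :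
    ∃ A : Set α, A.Finite ∧ ∀ c ∉ A, B ⊆ Reduct D (Cn {atom c}) := by
  have hBS : ∀ r ∈ B, ∃ d ∈ D, d.Applicable S ∧ r = (d.pre, d.con) := hBS
  have : Nonempty (Default α) := ⟨⟨fls, ∅, fls⟩⟩
  choose! d hdD hdS hrd using hBS
  refine ⟨⋃ r ∈ B, ⋃ γ ∈ (d r).jus, γ.atoms,
    hB.biUnion fun r _ => (d r).jus.finite_toSet.biUnion fun γ _ => γ.atoms_finite,
    fun c hc r hr => ⟨d r, hdD r hr, (hdS r hr).Cn_atom fun γ hγ hcγ => hc ?_, hrd r hr⟩⟩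
  exact Set.mem_biUnion hr (Set.mem_biUnion hγ hcγ)

theorem exists_finite_forall_mem_of_isExtension {D : Set (Default α)} {W S : Set (PropForm α)}
    (hS : IsExtension D W S) {φ : PropForm α} (hφ : φ ∈ S) :
    ∃ A : Set α, A.Finite ∧ ∀ c ∉ A, IsExtension D W (Cn {atom c}) → φ ∈ Cn {atom c} := by
  rw [hS] at hφ
  obtain ⟨B, hBS, hB, hφB⟩ := exists_finite_rules_of_mem_CnRules hφ
  obtain ⟨A, hA, hAB⟩ := exists_finite_forall_subset_Reduct_Cn_atom hB hBS
  exact ⟨A, hA, fun c hc hext => hext ▸ CnRules_mono (hAB c hc) hφB⟩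

theorem atoms_family_not_representable_general {α : Type}
    (p : ℕ → α) (hp : Function.Injective p)
    (𝒯 : Set (Set (PropForm α)))
    (h𝒯 : 𝒯 = {T | ∃ i : ℕ, T = Cn {PropForm.atom (p i)}}) :
    𝒯.Countable ∧
    (∀ T ∈ 𝒯, IsTheory T ∧ ∃ F : Finset (PropForm α), T = Cn ↑F) ∧
    (∀ T ∈ 𝒯, ∀ T' ∈ 𝒯, T ⊆ T' → T = T') ∧
    ¬ ∃ (D : Set (Default α)) (W : Set (PropForm α)), ext D W = 𝒯 := by
  obtain rfl : 𝒯 = Set.range fun i => Cn {atom (p i)} := by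
    simp only [h𝒯, Set.range, eq_comm]
  refine ⟨Set.countable_range _, ?_, ?_, ?_⟩
  · rintro _ ⟨i, rfl⟩
    exact ⟨isTheory_Cn _, {atom (p i)}, by rw [Finset.coe_singleton]⟩
  · rintro _ ⟨i, rfl⟩ _ ⟨j, rfl⟩ hij
    dsimp only at hij ⊢
    rw [atom_mem_Cn_atom_iff.mp (hij (subset_Cn _ rfl))]
  · rintro ⟨D, W, hDW⟩
    have hext : ∀ i, Cn {atom (p i)} ∈ ext D W := fun i => hDW ▸ Set.mem_range_self i
    obtain ⟨A, hA, hmem⟩ := exists_finite_forall_mem_of_isExtension (hext 0) (subset_Cn _ rfl)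
    obtain ⟨i, hi⟩ := ((hA.preimage hp.injOn).insert 0).exists_notMem
    have hpi : p 0 = p i := atom_mem_Cn_atom_iff.mp (hmem (p i) (fun h => hi (.inr h)) (hext i))
    exact hi (.inl (hp hpi).symm)

/-- the family `{ Cn({p_i}) : i ∈ ℕ }` is a countable family of finitely
generated non-including theories that is not representable by any default theory. -/
theorem atoms_family_not_representable {α : Type} [Denumerable α]
    (p : ℕ → α) (hp : Function.Injective p)
    (𝒯 : Set (Set (PropForm α)))
    (h𝒯 : 𝒯 = {T | ∃ i : ℕ, T = Cn {PropForm.atom (p i)}}) :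
    𝒯.Countable ∧
    (∀ T ∈ 𝒯, IsTheory T ∧ ∃ F : Finset (PropForm α), T = Cn ↑F) ∧
    (∀ T ∈ 𝒯, ∀ T' ∈ 𝒯, T ⊆ T' → T = T') ∧
    ¬ ∃ (D : Set (Default α)) (W : Set (PropForm α)), ext D W = 𝒯 :=
  atoms_family_not_representable_general p hp 𝒯 h𝒯
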